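/- arXiv:2510.11527 — 7 statements merged into one kernel-verified Lean document; each statement's English description precedes it below -/
import Mathlib

section
/- Let t = exp(iξ) for ξ ∈ [-π, π] and a > 0, Δx > 0. Define the 2×2 complex matrix G = (a/Δx²) · [[2(t⁻¹ - 2 + t), (1/2)(-t⁻² + t⁻¹ + 1 - t)], [-t⁻¹ + 1 + t - t², (1/4)(t⁻² + 8t⁻¹ - 18 + 8t + t²)]]. Then the characteristic polynomial of G equals λ² + c₁λ + c₂ with c₁ = 2a(9 + cos ξ) sin²(ξ/2)/Δx² and c₂ = 64 a² sin⁴(ξ/2)/Δx⁴. -/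
open Polynomial Complex

/-!
Writing `s = t + t⁻¹`, the trace and determinant of the unscaled symbol are polynomials in `s`
for every nonzero `t`: the trace is `(s - 2)(s + 18)/4` and, because the lower-left entry is `2t`
times the upper-right one, the determinant is `4 (s - 2)²`.
On the unit circle `s = 2 cos ξ`, so `s - 2 = -4 sin²(ξ/2)`, and the characteristic polynomial
`X² - tr G · X + det G` of the scaled symbol has the claimed coefficients.
-/

section Symbol

variable {K : Type*} [Field K] [CharZero K]

def activeFluxHeatSymbol (t : K) : Matrix (Fin 2) (Fin 2) K :=
  !![2 * (t⁻¹ - 2 + t), (1/2) * (-t⁻¹^2 + t⁻¹ + 1 - t);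
     -t⁻¹ + 1 + t - t^2, (1/4) * (t⁻¹^2 + 8*t⁻¹ - 18 + 8*t + t^2)]

theorem trace_activeFluxHeatSymbol {t : K} (ht : t ≠ 0) :
    (activeFluxHeatSymbol t).trace = (t + t⁻¹ - 2) * (t + t⁻¹ + 18) / 4 := by
  have h := mul_inv_cancel₀ ht
  simp only [activeFluxHeatSymbol, Matrix.trace_fin_two_of]
  linear_combination (-1/2 : K) * h

theorem det_activeFluxHeatSymbol {t : K} (ht : t ≠ 0) :
    (activeFluxHeatSymbol t).det = 4 * (t + t⁻¹ - 2) ^ 2 := by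
  simp only [activeFluxHeatSymbol, Matrix.det_fin_two_of]
  field_simp
  ring

end Symbol

theorem exp_I_mul_add_inv (x : ℂ) : exp (I * x) + (exp (I * x))⁻¹ = 2 * cos x := by
  rw [two_cos, ← exp_neg, mul_comm, neg_mul]

theorem stmt_0_general (a Δx ξ : ℝ)
    (t : ℂ) (ht : t = Complex.exp (Complex.I * ξ))
    (G : Matrix (Fin 2) (Fin 2) ℂ)
    (hG : G = ((a : ℂ) / (Δx : ℂ)^2) •
      !![2 * (t⁻¹ - 2 + t), (1/2) * (-t⁻¹^2 + t⁻¹ + 1 - t);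
         -t⁻¹ + 1 + t - t^2, (1/4) * (t⁻¹^2 + 8*t⁻¹ - 18 + 8*t + t^2)])
    (c₁ c₂ : ℝ)
    (hc₁ : c₁ = 2 * a * (9 + Real.cos ξ) * Real.sin (ξ/2) ^ 2 / Δx ^ 2)
    (hc₂ : c₂ = 64 * a ^ 2 * Real.sin (ξ/2) ^ 4 / Δx ^ 4) :
    G.charpoly = X ^ 2 + C (c₁ : ℂ) * X + C (c₂ : ℂ) := by
  have ht0 : t ≠ 0 := ht ▸ exp_ne_zero _
  have hs : t + t⁻¹ = 2 * cos ξ := ht ▸ exp_I_mul_add_inv ξ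
  have hcos : cos (ξ : ℂ) = 1 - 2 * sin (ξ / 2) ^ 2 := by
    rw [← cos_two_mul_eq_one_sub, mul_div_cancel₀ _ two_ne_zero]
  change G = _ • activeFluxHeatSymbol t at hG
  have htrace : G.trace = -c₁ := by
    rw [hG, Matrix.trace_smul, trace_activeFluxHeatSymbol ht0, hs, hc₁]
    push_cast
    rw [hcos, smul_eq_mul]
    ring
  have hdet : G.det = c₂ := by
    rw [hG, Matrix.det_smul, det_activeFluxHeatSymbol ht0, hs, hc₂, Fintype.card_fin]
    push_cast
    rw [hcos]
    ring
  rw [Matrix.charpoly_fin_two, htrace, hdet, map_neg]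
  ring

theorem stmt_0 (a Δx ξ : ℝ) (ha : 0 < a) (hΔx : 0 < Δx)
    (hξ : ξ ∈ Set.Icc (-Real.pi) Real.pi)
    (t : ℂ) (ht : t = Complex.exp (Complex.I * ξ))
    (G : Matrix (Fin 2) (Fin 2) ℂ)
    (hG : G = ((a : ℂ) / (Δx : ℂ)^2) •
      !![2 * (t⁻¹ - 2 + t), (1/2) * (-t⁻¹^2 + t⁻¹ + 1 - t);
         -t⁻¹ + 1 + t - t^2, (1/4) * (t⁻¹^2 + 8*t⁻¹ - 18 + 8*t + t^2)])
    (c₁ c₂ : ℝ)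
    (hc₁ : c₁ = 2 * a * (9 + Real.cos ξ) * Real.sin (ξ/2) ^ 2 / Δx ^ 2)
    (hc₂ : c₂ = 64 * a ^ 2 * Real.sin (ξ/2) ^ 4 / Δx ^ 4) :
    G.charpoly = X ^ 2 + C (c₁ : ℂ) * X + C (c₂ : ℂ) :=
  stmt_0_general a Δx ξ t ht G hG c₁ c₂ hc₁ hc₂
end

section
/- For every ξ ∈ [-π, π], the quantity c₁² - 4c₂, where c₁ = 2a(9 + cos ξ) sin²(ξ/2)/Δx² and c₂ = 64 a² sin⁴(ξ/2)/Δx⁴, equals (8a²/Δx⁴)(17 + cos ξ) sin⁴(ξ/2) cos²(ξ/2), and hence is nonnegative. Consequently the two roots of λ² + c₁λ + c₂ = 0 are real. -/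
/-!
Writing `C = cos ξ`, the discriminant factors because `(9 + C)² - 64 = (C + 1)(C + 17)` and
`1 + C = 2 cos² (ξ/2)`; its sign is then that of `17 + C ≥ 16`, and a monic real quadratic with
nonnegative discriminant splits over `ℝ`.
-/

open Real

theorem monic_quadratic_eq_mul_of_discrim_eq {K : Type*} [Field K] [NeZero (2 : K)]
    {b c s : K} (h : discrim 1 b c = s * s) (x : K) :
    x ^ 2 + b * x + c = (x - (-b + s) / 2) * (x - (-b - s) / 2) := by
  rw [discrim, mul_one] at h
  field_simp
  linear_combination -h

theorem exists_monic_quadratic_eq_mul_of_discrim_nonneg {b c : ℝ} (h : 0 ≤ b ^ 2 - 4 * c) :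
    ∃ r₁ r₂ : ℝ, ∀ x : ℝ, x ^ 2 + b * x + c = (x - r₁) * (x - r₂) :=
  ⟨_, _, monic_quadratic_eq_mul_of_discrim_eq (s := √(b ^ 2 - 4 * c))
    (by rw [discrim, mul_one, mul_self_sqrt h])⟩

theorem activeFlux_discrim_eq (a Δx ξ : ℝ) :
    (2 * a * (9 + cos ξ) * sin (ξ / 2) ^ 2 / Δx ^ 2) ^ 2
        - 4 * (64 * a ^ 2 * sin (ξ / 2) ^ 4 / Δx ^ 4) =
      8 * a ^ 2 / Δx ^ 4 * (17 + cos ξ) * sin (ξ / 2) ^ 4 * cos (ξ / 2) ^ 2 := by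
  obtain ⟨θ, rfl⟩ : ∃ θ, ξ = 2 * θ := ⟨ξ / 2, by ring⟩
  rw [mul_div_cancel_left₀ θ two_ne_zero, cos_two_mul, cos_sq']
  ring

theorem activeFlux_discrim_nonneg (a Δx ξ : ℝ) :
    0 ≤ 8 * a ^ 2 / Δx ^ 4 * (17 + cos ξ) * sin (ξ / 2) ^ 4 * cos (ξ / 2) ^ 2 := by
  have : 0 ≤ 17 + cos ξ := by linarith [neg_one_le_cos ξ]
  positivity

theorem stmt_1_general (a Δx : ℝ) :
    ∀ ξ ∈ Set.Icc (-Real.pi) Real.pi,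
    ∀ c₁ c₂ : ℝ,
    c₁ = 2 * a * (9 + Real.cos ξ) * Real.sin (ξ/2) ^ 2 / Δx ^ 2 →
    c₂ = 64 * a ^ 2 * Real.sin (ξ/2) ^ 4 / Δx ^ 4 →
    (c₁ ^ 2 - 4 * c₂ =
        (8 * a ^ 2 / Δx ^ 4) * (17 + Real.cos ξ) * Real.sin (ξ/2) ^ 4 * Real.cos (ξ/2) ^ 2)
    ∧ 0 ≤ c₁ ^ 2 - 4 * c₂
    ∧ ∃ r₁ r₂ : ℝ, ∀ x : ℝ, x ^ 2 + c₁ * x + c₂ = (x - r₁) * (x - r₂) := by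
  intro ξ _ c₁ c₂ hc₁ hc₂
  have hdiscrim : c₁ ^ 2 - 4 * c₂ = _ := hc₁ ▸ hc₂ ▸ activeFlux_discrim_eq a Δx ξ
  have hnonneg : 0 ≤ c₁ ^ 2 - 4 * c₂ := hdiscrim ▸ activeFlux_discrim_nonneg a Δx ξ
  exact ⟨hdiscrim, hnonneg, exists_monic_quadratic_eq_mul_of_discrim_nonneg hnonneg⟩

theorem stmt_1 (a Δx : ℝ) (ha : 0 < a) (hΔx : 0 < Δx) :
    ∀ ξ ∈ Set.Icc (-Real.pi) Real.pi,
    ∀ c₁ c₂ : ℝ,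
    c₁ = 2 * a * (9 + Real.cos ξ) * Real.sin (ξ/2) ^ 2 / Δx ^ 2 →
    c₂ = 64 * a ^ 2 * Real.sin (ξ/2) ^ 4 / Δx ^ 4 →
    (c₁ ^ 2 - 4 * c₂ =
        (8 * a ^ 2 / Δx ^ 4) * (17 + Real.cos ξ) * Real.sin (ξ/2) ^ 4 * Real.cos (ξ/2) ^ 2)
    ∧ 0 ≤ c₁ ^ 2 - 4 * c₂
    ∧ ∃ r₁ r₂ : ℝ, ∀ x : ℝ, x ^ 2 + c₁ * x + c₂ = (x - r₁) * (x - r₂) :=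
  stmt_1_general a Δx
end

section
/- Let c₁ = 2a(9 + cos ξ) sin²(ξ/2)/Δx² and c₂ = 64 a² sin⁴(ξ/2)/Δx⁴ with a > 0, Δx > 0, ξ ∈ [-π, π]. Both roots λ₁ = (-c₁ + √(c₁² - 4c₂))/2 and λ₂ = (-c₁ - √(c₁² - 4c₂))/2 of λ² + c₁λ + c₂ are nonpositive, and they are both strictly negative whenever sin(ξ/2) ≠ 0. -/
/-! Since `9 + cos ξ > 0`, both coefficients are nonnegative (positive when `sin (ξ/2) ≠ 0`),
and then `√(c₁ ^ 2 - 4 c₂) ≤ c₁` (strictly when `c₂ > 0`) puts both roots in `(-∞, 0]`. -/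

open Real

lemma sqrt_discrim_le {b c : ℝ} (hb : 0 ≤ b) (hc : 0 ≤ c) : √(b ^ 2 - 4 * c) ≤ b :=
  calc √(b ^ 2 - 4 * c) ≤ √(b ^ 2) := Real.sqrt_le_sqrt (by linarith)
    _ = b := Real.sqrt_sq hb

lemma sqrt_discrim_lt {b c : ℝ} (hb : 0 < b) (hc : 0 < c) : √(b ^ 2 - 4 * c) < b :=
  (Real.sqrt_lt' hb).mpr (by linarith)

lemma quadratic_roots_nonpos {b c : ℝ} (hb : 0 ≤ b) (hc : 0 ≤ c) :
    (-b + √(b ^ 2 - 4 * c)) / 2 ≤ 0 ∧ (-b - √(b ^ 2 - 4 * c)) / 2 ≤ 0 := by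
  have := sqrt_discrim_le hb hc
  have := Real.sqrt_nonneg (b ^ 2 - 4 * c)
  constructor <;> linarith

lemma quadratic_roots_neg {b c : ℝ} (hb : 0 < b) (hc : 0 < c) :
    (-b + √(b ^ 2 - 4 * c)) / 2 < 0 ∧ (-b - √(b ^ 2 - 4 * c)) / 2 < 0 := by
  have := sqrt_discrim_lt hb hc
  have := Real.sqrt_nonneg (b ^ 2 - 4 * c)
  constructor <;> linarith

lemma nine_add_cos_pos (ξ : ℝ) : 0 < 9 + cos ξ := by
  linarith [neg_one_le_cos ξ]

theorem stmt_2_general (a Δx ξ : ℝ) (ha : 0 < a) (hΔx : 0 < Δx)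
    (c₁ c₂ lam₁ lam₂ : ℝ)
    (hc₁ : c₁ = 2 * a * (9 + Real.cos ξ) * Real.sin (ξ/2) ^ 2 / Δx ^ 2)
    (hc₂ : c₂ = 64 * a ^ 2 * Real.sin (ξ/2) ^ 4 / Δx ^ 4)
    (hlam₁ : lam₁ = (-c₁ + Real.sqrt (c₁ ^ 2 - 4 * c₂)) / 2)
    (hlam₂ : lam₂ = (-c₁ - Real.sqrt (c₁ ^ 2 - 4 * c₂)) / 2) :
    lam₁ ≤ 0 ∧ lam₂ ≤ 0 ∧ (Real.sin (ξ/2) ≠ 0 → lam₁ < 0 ∧ lam₂ < 0) := by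
  subst hlam₁ hlam₂
  have hcos := nine_add_cos_pos ξ
  have hc₁₀ : 0 ≤ c₁ := hc₁ ▸ by positivity
  have hc₂₀ : 0 ≤ c₂ := hc₂ ▸ by positivity
  obtain ⟨hlam₁, hlam₂⟩ := quadratic_roots_nonpos hc₁₀ hc₂₀
  refine ⟨hlam₁, hlam₂, fun hs ↦ ?_⟩
  have hc₁_pos : 0 < c₁ := hc₁ ▸ by positivity
  have hc₂_pos : 0 < c₂ := hc₂ ▸ by positivity
  exact quadratic_roots_neg hc₁_pos hc₂_pos

theorem stmt_2 (a Δx ξ : ℝ) (ha : 0 < a) (hΔx : 0 < Δx)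
    (hξ : ξ ∈ Set.Icc (-Real.pi) Real.pi)
    (c₁ c₂ lam₁ lam₂ : ℝ)
    (hc₁ : c₁ = 2 * a * (9 + Real.cos ξ) * Real.sin (ξ/2) ^ 2 / Δx ^ 2)
    (hc₂ : c₂ = 64 * a ^ 2 * Real.sin (ξ/2) ^ 4 / Δx ^ 4)
    (hlam₁ : lam₁ = (-c₁ + Real.sqrt (c₁ ^ 2 - 4 * c₂)) / 2)
    (hlam₂ : lam₂ = (-c₁ - Real.sqrt (c₁ ^ 2 - 4 * c₂)) / 2) :
    lam₁ ≤ 0 ∧ lam₂ ≤ 0 ∧ (Real.sin (ξ/2) ≠ 0 → lam₁ < 0 ∧ lam₂ < 0) :=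
  stmt_2_general a Δx ξ ha hΔx c₁ c₂ lam₁ lam₂ hc₁ hc₂ hlam₁ hlam₂
end

section
/- Define λ₁(Δx) = (-c₁(Δx) + √(c₁(Δx)² - 4c₂(Δx)))/2 where, with ξ = ωΔx, c₁(Δx) = 2a(9 + cos ξ) sin²(ξ/2)/Δx² and c₂(Δx) = 64 a² sin⁴(ξ/2)/Δx⁴. Then as Δx → 0⁺, λ₁(Δx) = -aω² + (aω⁶/540)Δx⁴ + O(Δx⁵); in particular λ₁(Δx) approximates the exact heat-equation decay rate -aω² with fourth-order accuracy in Δx. -/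
section CosTaylor
open Finset Complex

lemma cos_taylor8 (x : ℝ) (hx : |x| ≤ 1) :
    |Real.cos x - (1 - x^2/2 + x^4/24 - x^6/720)| ≤ x^8 := by
  have habs : ‖(x:ℂ) * I‖ ≤ 1 := by simpa using hx
  have habs' : ‖-(x:ℂ) * I‖ ≤ 1 := by simpa using hx
  have e1 := Complex.exp_bound habs (n := 8) (by norm_num)
  have e2 := Complex.exp_bound habs' (n := 8) (by norm_num)
  have key : (Real.cos x - (1 - x^2/2 + x^4/24 - x^6/720) : ℂ)
      = ((Complex.exp ((x:ℂ) * I) - ∑ m ∈ range 8, ((x:ℂ) * I) ^ m / m.factorial) +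
          (Complex.exp (-(x:ℂ) * I) - ∑ m ∈ range 8, (-(x:ℂ) * I) ^ m / m.factorial)) / 2 := by
    rw [show ((Real.cos x : ℝ) : ℂ) = Complex.cos x by simp]
    rw [Complex.cos]
    simp only [sum_range_succ, range_zero, sum_empty, Nat.factorial]
    push_cast
    apply Complex.ext <;> simp [div_eq_mul_inv, normSq, pow_succ, Complex.I_mul_I] <;> ring_nf
  have hx8 : |x| ^ 8 = x ^ 8 := by
    rw [← _root_.abs_pow]; exact abs_of_nonneg (by positivity)
  have h1 : |Real.cos x - (1 - x^2/2 + x^4/24 - x^6/720)|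
      = ‖(Real.cos x - (1 - x^2/2 + x^4/24 - x^6/720) : ℂ)‖ := by
    rw [← Real.norm_eq_abs, ← Complex.norm_real]; push_cast; ring_nf
  rw [h1, key]
  have hb : ‖(x:ℂ) * I‖ = |x| := by simpa using rfl
  calc ‖_‖ ≤ (‖Complex.exp ((x:ℂ) * I) - ∑ m ∈ range 8, ((x:ℂ) * I) ^ m / m.factorial‖
        + ‖Complex.exp (-(x:ℂ) * I) - ∑ m ∈ range 8, (-(x:ℂ) * I) ^ m / m.factorial‖) / 2 := by
        rw [norm_div]
        gcongr
        · exact norm_add_le _ _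
        · simp
    _ ≤ x ^ 8 := by
        have b1 : ‖(x:ℂ) * I‖ ^ 8 = x ^ 8 := by
          rw [← hx8]; congr 1
        have b2 : ‖-(x:ℂ) * I‖ ^ 8 = x ^ 8 := by
          rw [← hx8]; congr 1; simp
        rw [b1] at e1; rw [b2] at e2
        have hxp : (0:ℝ) ≤ x ^ 8 := by positivity
        norm_num [Nat.factorial] at e1 e2 ⊢
        nlinarith



end CosTaylor

set_option maxHeartbeats 1000000 in
lemma key_bound (a u s q e₁ : ℝ) (ha : 0 < a) (hu0 : 0 ≤ u) (hu1 : u ≤ 1)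
    (hs0 : 0 ≤ s) (hsu : 4*s ≤ u)
    (hq2 : q^2 = 9 - 10*s + s^2) (hq0 : 0 ≤ q)
    (he : e₁ = q - (3 - 5*s/3 - 8*s^2/27))
    (hrho : |s - (u/4 - u^2/48 + u^3/1440)| ≤ u^4/2) :
    |(-32*a*s + (a*u - a*u^3/540) * (8 - 8*s/3 - 8*s^2/27 + e₁))| ≤ 19*a*u^4 := by
  have hs14 : s ≤ 1/4 := by linarith
  have hpow : ∀ n m : ℕ, n ≤ m → u^m ≤ u^n := fun n m h => pow_le_pow_of_le_one hu0 hu1 h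
  have h54 := hpow 4 5 (by norm_num)
  have h64 := hpow 4 6 (by norm_num)
  have h74 := hpow 4 7 (by norm_num)
  have h84 := hpow 4 8 (by norm_num)
  have h94 := hpow 4 9 (by norm_num)
  have h31 := hpow 1 3 (by norm_num)
  have h40 : (0:ℝ) ≤ u^4 := pow_nonneg hu0 4
  have h50 : (0:ℝ) ≤ u^5 := pow_nonneg hu0 5
  have h60 : (0:ℝ) ≤ u^6 := pow_nonneg hu0 6
  have h70 : (0:ℝ) ≤ u^7 := pow_nonneg hu0 7
  have h80 : (0:ℝ) ≤ u^8 := pow_nonneg hu0 8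
  have h90 : (0:ℝ) ≤ u^9 := pow_nonneg hu0 9
  have hp2 : 2 ≤ 3 - 5*s/3 - 8*s^2/27 := by nlinarith
  have hqp : e₁ * (q + (3 - 5*s/3 - 8*s^2/27)) = -80*s^3/81 - 64*s^4/729 := by
    rw [he]; linear_combination hq2
  have hqpos : 2 ≤ q + (3 - 5*s/3 - 8*s^2/27) := by linarith
  have he1_le : e₁ ≤ 0 := by nlinarith [hqp, hqpos, hs0, sq_nonneg s]
  have he1_ge : -2*s^3 ≤ e₁ := by nlinarith [hqp, hqpos, hs0, hs14]
  have hs0u : 0 ≤ u/4 - u^2/48 + u^3/1440 := by nlinarith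
  have hs0u' : u/4 - u^2/48 + u^3/1440 ≤ u/4 := by nlinarith
  have hAu0 : 0 ≤ a*u - a*u^3/540 := by nlinarith [mul_le_mul_of_nonneg_left h31 ha.le, mul_nonneg ha.le hu0]
  have hAu1 : a*u - a*u^3/540 ≤ a*u := by nlinarith [mul_nonneg ha.le (pow_nonneg hu0 3)]
  have hAua : a*u ≤ a := by nlinarith [mul_le_mul_of_nonneg_left hu1 ha.le]
  obtain ⟨hr1, hr2⟩ := abs_le.mp hrho
  have hid : -32*a*s + (a*u - a*u^3/540) * (8 - 8*s/3 - 8*s^2/27 + e₁)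
      = a*(u^4/405 - 7*u^5/23328 + 11*u^6/1749600 + u^7/3499200 - u^8/62985600 + u^9/3779136000)
        + (s - (u/4 - u^2/48 + u^3/1440)) *
            (-32*a - (a*u - a*u^3/540)*(8/3 + (8/27)*(s + (u/4 - u^2/48 + u^3/1440))))
        + (a*u - a*u^3/540)*e₁ := by ring
  rw [hid]
  -- piece 1
  have hpoly0 : 0 ≤ u^4/405 - 7*u^5/23328 + 11*u^6/1749600 + u^7/3499200 - u^8/62985600 + u^9/3779136000 := by
    linarith
  have hpoly1 : u^4/405 - 7*u^5/23328 + 11*u^6/1749600 + u^7/3499200 - u^8/62985600 + u^9/3779136000 ≤ u^4/100 := by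
    linarith
  have hb1 : |a*(u^4/405 - 7*u^5/23328 + 11*u^6/1749600 + u^7/3499200 - u^8/62985600 + u^9/3779136000)|
      ≤ a*(u^4/100) := by
    rw [abs_of_nonneg (mul_nonneg ha.le hpoly0)]
    exact mul_le_mul_of_nonneg_left hpoly1 ha.le
  -- piece 2
  have hK : |(-32*a - (a*u - a*u^3/540)*(8/3 + (8/27)*(s + (u/4 - u^2/48 + u^3/1440))))| ≤ 36*a := by
    have hB1 : (0:ℝ) ≤ 8/3 + (8/27)*(s + (u/4 - u^2/48 + u^3/1440)) := by linarith
    have hB2 : 8/3 + (8/27)*(s + (u/4 - u^2/48 + u^3/1440)) ≤ 3 := by nlinarith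
    have hAB0 : 0 ≤ (a*u - a*u^3/540) * (8/3 + (8/27)*(s + (u/4 - u^2/48 + u^3/1440))) :=
      mul_nonneg hAu0 hB1
    have hAB1 : (a*u - a*u^3/540) * (8/3 + (8/27)*(s + (u/4 - u^2/48 + u^3/1440))) ≤ a*3 :=
      mul_le_mul (hAu1.trans hAua) hB2 hB1 ha.le
    rw [abs_le]
    constructor <;> linarith
  have hb2 : |(s - (u/4 - u^2/48 + u^3/1440)) *
      (-32*a - (a*u - a*u^3/540)*(8/3 + (8/27)*(s + (u/4 - u^2/48 + u^3/1440))))| ≤ (u^4/2)*(36*a) := by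
    rw [abs_mul]
    exact mul_le_mul hrho hK (abs_nonneg _) (by linarith)
  -- piece 3
  have hs3 : s^3 ≤ u^3/64 := by
    have h := pow_le_pow_left₀ (by linarith : (0:ℝ) ≤ 4*s) hsu 3
    have he : (4*s)^3 = 64*s^3 := by ring
    linarith
  have he1abs : |e₁| ≤ u^3/32 := by
    rw [abs_le]; constructor <;> nlinarith
  have hb3 : |(a*u - a*u^3/540)*e₁| ≤ (a*u)*(u^3/32) := by
    rw [abs_mul]
    refine mul_le_mul ?_ he1abs (abs_nonneg _) (mul_nonneg ha.le hu0)
    rw [abs_of_nonneg hAu0]; exact hAu1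
  refine (abs_add_three _ _ _).trans ?_
  refine le_trans (add_le_add (add_le_add hb1 hb2) hb3) ?_
  have he4 : (a*u)*(u^3/32) = a*u^4/32 := by ring
  have he5 : (u^4/2)*(36*a) = 18*(a*u^4) := by ring
  have he6 : a*(u^4/100) = (a*u^4)/100 := by ring
  have h7 : 0 ≤ a*u^4 := mul_nonneg ha.le h40
  rw [he4, he5, he6]; linarith

open Asymptotics

theorem stmt_3 (a ω : ℝ) (ha : 0 < a) (hω : ω ≠ 0)
    (c₁ c₂ lam₁ : ℝ → ℝ)
    (hc₁ : ∀ Δx, c₁ Δx = 2 * a * (9 + Real.cos (ω * Δx)) * Real.sin (ω * Δx / 2) ^ 2 / Δx ^ 2)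
    (hc₂ : ∀ Δx, c₂ Δx = 64 * a ^ 2 * Real.sin (ω * Δx / 2) ^ 4 / Δx ^ 4)
    (hlam₁ : ∀ Δx, lam₁ Δx = (-(c₁ Δx) + Real.sqrt ((c₁ Δx) ^ 2 - 4 * c₂ Δx)) / 2) :
    (fun Δx => lam₁ Δx - (-(a * ω ^ 2) + (a * ω ^ 6 / 540) * Δx ^ 4))
      =O[nhdsWithin 0 (Set.Ioi 0)] (fun Δx => Δx ^ 5) := by
  rw [Asymptotics.isBigO_iff]
  refine ⟨(19/4)*a*ω^8, ?_⟩
  have hω' : 0 < |ω| := abs_pos.mpr hω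
  have hδ : (0:ℝ) < min 1 (1/|ω|) := lt_min one_pos (by positivity)
  filter_upwards [Ioo_mem_nhdsGT_of_mem (Set.left_mem_Ico.mpr hδ)] with x hx
  obtain ⟨hx0, hxδ⟩ := hx
  have hxne : x ≠ 0 := ne_of_gt hx0
  have hx1 : x ≤ 1 := le_of_lt (lt_of_lt_of_le hxδ (min_le_left _ _))
  have hz1 : |ω*x| ≤ 1 := by
    rw [abs_mul, abs_of_pos hx0]
    have := lt_of_lt_of_le hxδ (min_le_right _ _)
    rw [lt_div_iff₀ hω'] at this
    linarith [mul_comm x |ω| ▸ this]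
  have hu1 : ω^2*x^2 ≤ 1 := by
    have h := pow_le_one₀ (abs_nonneg (ω*x)) hz1 (n := 2)
    rw [sq_abs] at h
    calc ω^2*x^2 = (ω*x)^2 := by ring
      _ ≤ 1 := h
  obtain ⟨s, hsdef⟩ : ∃ s', s' = Real.sin (ω*x/2)^2 := ⟨_, rfl⟩
  have hs0 : 0 ≤ s := hsdef ▸ sq_nonneg _
  have hsu : 4*s ≤ ω^2*x^2 := by
    have h := Real.sin_sq_le_sq (x := ω*x/2)
    rw [← hsdef] at h
    nlinarith [h]
  have hs14 : s ≤ 1/4 := by linarith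
  have hcos : Real.cos (ω*x) = 1 - 2*s := by
    rw [hsdef, show ω*x = 2*(ω*x/2) by ring, Real.cos_two_mul, Real.cos_sq']
    ring
  have hc1 : c₁ x = 4*a*(5-s)*s/x^2 := by
    rw [hc₁ x, hcos, ← hsdef]; ring
  have hsin4 : Real.sin (ω*x/2)^4 = s^2 := by rw [hsdef]; ring
  have hdisc : c₁ x ^ 2 - 4 * c₂ x = (4*a*s/x^2)^2*(9-10*s+s^2) := by
    rw [hc1, hc₂ x, hsin4]
    field_simp
    ring
  obtain ⟨q, hqdef⟩ : ∃ q', q' = Real.sqrt (9 - 10*s + s^2) := ⟨_, rfl⟩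
  have hw0 : (0:ℝ) ≤ 9 - 10*s + s^2 := by nlinarith
  have hq2 : q^2 = 9 - 10*s + s^2 := hqdef ▸ Real.sq_sqrt hw0
  have hq0 : 0 ≤ q := hqdef ▸ Real.sqrt_nonneg _
  have hsq : Real.sqrt ((4*a*s/x^2)^2*(9-10*s+s^2)) = (4*a*s/x^2)*q := by
    rw [hqdef, Real.sqrt_mul (sq_nonneg _), Real.sqrt_sq
      (div_nonneg (mul_nonneg (mul_nonneg (by norm_num) ha.le) hs0) (sq_nonneg x))]
  have hexp : (-(4*a*(5-s)*s/x^2) + (4*a*s/x^2)*q)/2 * (x^2*(q+5-s))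
      = 2*a*s*(q^2 - 25 + 10*s - s^2) := by
    field_simp
    ring
  have hprod : lam₁ x * (x^2*(q+5-s)) = -32*a*s := by
    rw [hlam₁ x, hdisc, hsq, hc1, hexp, hq2]; ring
  -- taylor remainder for s
  have hct := cos_taylor8 (ω*x) hz1
  rw [hcos] at hct
  have hrho : |s - (ω^2*x^2/4 - (ω^2*x^2)^2/48 + (ω^2*x^2)^3/1440)| ≤ (ω^2*x^2)^4/2 := by
    have h1 : s - (ω^2*x^2/4 - (ω^2*x^2)^2/48 + (ω^2*x^2)^3/1440)
        = -((1 - 2*s - (1 - (ω*x)^2/2 + (ω*x)^4/24 - (ω*x)^6/720))/2) := by ring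
    rw [h1, abs_neg, abs_div, abs_two]
    have h2 : |1 - 2*s - (1 - (ω*x)^2/2 + (ω*x)^4/24 - (ω*x)^6/720)| ≤ (ω^2*x^2)^4 := by
      calc |1 - 2*s - (1 - (ω*x)^2/2 + (ω*x)^4/24 - (ω*x)^6/720)| ≤ (ω*x)^8 := hct
        _ = (ω^2*x^2)^4 := by ring
    linarith
  have hkey := key_bound a (ω^2*x^2) s q (q - (3 - 5*s/3 - 8*s^2/27)) ha (by positivity) hu1
    hs0 hsu hq2 hq0 rfl hrho
  have hNeq : (lam₁ x - (-(a * ω ^ 2) + (a * ω ^ 6 / 540) * x ^ 4)) * (x^2*(q+5-s))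
      = -32*a*s + (a*(ω^2*x^2) - a*(ω^2*x^2)^3/540) *
          (8 - 8*s/3 - 8*s^2/27 + (q - (3 - 5*s/3 - 8*s^2/27))) := by
    linear_combination hprod
  have hDpos : 0 < x^2*(q+5-s) := mul_pos (by positivity) (by linarith)
  have hD4 : 4*x^2 ≤ x^2*(q+5-s) := by
    have h := mul_le_mul_of_nonneg_left (show (4:ℝ) ≤ q+5-s by linarith) (sq_nonneg x)
    linarith
  obtain ⟨t, htdef⟩ : ∃ t', t' = lam₁ x - (-(a * ω ^ 2) + (a * ω ^ 6 / 540) * x ^ 4) := ⟨_, rfl⟩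
  rw [← htdef] at hNeq ⊢
  have habs : |t| * (x^2*(q+5-s)) ≤ 19*a*(ω^2*x^2)^4 := by
    calc |t| * (x^2*(q+5-s)) = |t * (x^2*(q+5-s))| := by
          rw [abs_mul, abs_of_pos hDpos]
      _ ≤ 19*a*(ω^2*x^2)^4 := by rw [hNeq]; exact hkey
  have habs2 : |t| * (4*x^2) ≤ 19*a*(ω^2*x^2)^4 :=
    le_trans (mul_le_mul_of_nonneg_left hD4 (abs_nonneg t)) habs
  have hfin : |t| ≤ (19/4)*a*ω^8*x^6 := by
    have h4 : (0:ℝ) < 4*x^2 := by positivity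
    have he : 19*a*(ω^2*x^2)^4 = ((19/4)*a*ω^8*x^6) * (4*x^2) := by ring
    rw [he] at habs2
    exact le_of_mul_le_mul_right habs2 h4
  rw [Real.norm_eq_abs, Real.norm_eq_abs, abs_of_pos (pow_pos hx0 5)]
  have hx65 : x^6 ≤ x^5 := pow_le_pow_of_le_one hx0.le hx1 (by norm_num)
  calc |t| ≤ (19/4)*a*ω^8*x^6 := hfin
    _ ≤ (19/4)*a*ω^8*x^5 := by gcongr
    _ = 19/4*a*ω^8 * x^5 := by ring
end

section
/- Define λ₂(Δx) = (-c₁(Δx) - √(c₁(Δx)² - 4c₂(Δx)))/2 with c₁, c₂ as in the Fourier analysis of the active flux scheme (ξ = ωΔx). Then as Δx → 0⁺, λ₂(Δx) = -4aω² + (2aω⁴/3)Δx² + O(Δx⁴). -/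
open Asymptotics Finset

theorem cos_bound8 {x : ℝ} (hx : |x| ≤ 1) :
    |Real.cos x - (1 - x ^ 2 / 2 + x ^ 4 / 24 - x ^ 6 / 720)| ≤ |x| ^ 8 * (9 / 322560) :=
  calc
    |Real.cos x - (1 - x ^ 2 / 2 + x ^ 4 / 24 - x ^ 6 / 720)|
        = ‖Complex.cos x - (1 - (x : ℂ) ^ 2 / 2 + (x : ℂ) ^ 4 / 24 - (x : ℂ) ^ 6 / 720)‖ := by
      rw [← Real.norm_eq_abs, ← Complex.norm_real]; simp
    _ = ‖((Complex.exp (x * Complex.I) - ∑ m ∈ range 8, (x * Complex.I) ^ m / m.factorial) +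
              (Complex.exp (-x * Complex.I) - ∑ m ∈ range 8, (-x * Complex.I) ^ m / m.factorial)) / 2‖ := by
      congr 1
      rw [Complex.cos]
      simp only [sum_range_succ, range_zero, sum_empty, Nat.factorial]
      push_cast
      have h2 : Complex.I ^ 2 = -1 := Complex.I_sq
      have h3 : Complex.I ^ 3 = -Complex.I := by rw [pow_succ, h2]; ring
      have h4 : Complex.I ^ 4 = 1 := by rw [pow_succ, h3]; simp [Complex.I_mul_I]
      have h5 : Complex.I ^ 5 = Complex.I := by rw [pow_succ, h4]; ring
      have h6 : Complex.I ^ 6 = -1 := by rw [pow_succ, h5]; simp [Complex.I_mul_I]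
      have h7 : Complex.I ^ 7 = -Complex.I := by rw [pow_succ, h6]; ring
      ring_nf
      simp only [h2, h3, h4, h5, h6, h7]
      ring
    _ ≤ ‖(Complex.exp (x * Complex.I) - ∑ m ∈ range 8, (x * Complex.I) ^ m / m.factorial) / 2‖ +
          ‖(Complex.exp (-x * Complex.I) - ∑ m ∈ range 8, (-x * Complex.I) ^ m / m.factorial) / 2‖ := by
      rw [add_div]; exact norm_add_le _ _
    _ = ‖Complex.exp (x * Complex.I) - ∑ m ∈ range 8, (x * Complex.I) ^ m / m.factorial‖ / 2 +
          ‖Complex.exp (-x * Complex.I) - ∑ m ∈ range 8, (-x * Complex.I) ^ m / m.factorial‖ / 2 := by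
      simp [map_div₀]
    _ ≤ ‖x * Complex.I‖ ^ 8 * ((Nat.succ 8 : ℝ) * ((Nat.factorial 8 : ℝ) * (8 : ℕ))⁻¹) / 2 +
          ‖-x * Complex.I‖ ^ 8 * ((Nat.succ 8 : ℝ) * ((Nat.factorial 8 : ℝ) * (8 : ℕ))⁻¹) / 2 := by
      gcongr
      · exact Complex.exp_bound (by simpa) (by norm_num)
      · exact Complex.exp_bound (by simpa) (by norm_num)
    _ ≤ |x| ^ 8 * (9 / 322560) := by
      norm_num [Nat.factorial]

set_option maxHeartbeats 1000000 in
theorem stmt_4 (a ω : ℝ) (ha : 0 < a) (hω : ω ≠ 0)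
    (c₁ c₂ lam₂ : ℝ → ℝ)
    (hc₁ : ∀ Δx, c₁ Δx = 2 * a * (9 + Real.cos (ω * Δx)) * Real.sin (ω * Δx / 2) ^ 2 / Δx ^ 2)
    (hc₂ : ∀ Δx, c₂ Δx = 64 * a ^ 2 * Real.sin (ω * Δx / 2) ^ 4 / Δx ^ 4)
    (hlam₂ : ∀ Δx, lam₂ Δx = (-(c₁ Δx) - Real.sqrt ((c₁ Δx) ^ 2 - 4 * c₂ Δx)) / 2) :
    (fun Δx => lam₂ Δx - (-(4 * a * ω ^ 2) + (2 * a * ω ^ 4 / 3) * Δx ^ 2))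
      =O[nhdsWithin 0 (Set.Ioi 0)] (fun Δx => Δx ^ 4) := by
  have hω2 : 0 < ω ^ 2 := by positivity
  have hb : 0 < a * ω ^ 2 := by positivity
  rw [isBigO_iff]
  refine ⟨(33 + 48 * ω ^ 2) * (a * ω ^ 6), ?_⟩
  have hωpos : 0 < |ω| := abs_pos.mpr hω
  have hδ : (0:ℝ) < min 1 (1 / (2 * |ω|)) := by positivity
  filter_upwards [Ioo_mem_nhdsGT_of_mem (Set.mem_Ico.mpr ⟨le_refl 0, hδ⟩)] with u hu
  obtain ⟨hu0, huδ⟩ := hu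
  have hu1 : u ≤ 1 := le_trans huδ.le (min_le_left _ _)
  have hu0' : u ≠ 0 := ne_of_gt hu0
  have hu2 : u ^ 2 ≤ 1 := by nlinarith only [hu0, hu1]
  obtain ⟨τ, hτdef⟩ : ∃ τ : ℝ, τ = ω * u := ⟨_, rfl⟩
  have hτabs : |τ| ≤ 1 / 2 := by
    have h2 : u ≤ 1 / (2 * |ω|) := le_trans huδ.le (min_le_right _ _)
    rw [le_div_iff₀ (by positivity)] at h2
    rw [hτdef, abs_mul, abs_of_pos hu0]
    linarith only [h2]
  have hτ2 : τ ^ 2 ≤ 1 / 4 := by nlinarith only [hτabs, abs_nonneg τ, sq_abs τ]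
  have hτ4 : τ ^ 4 ≤ 1 / 16 := by nlinarith only [hτ2, sq_nonneg τ, sq_nonneg (τ ^ 2)]
  have hτ6 : τ ^ 6 ≤ 1 := by nlinarith only [hτ2, hτ4, sq_nonneg τ, sq_nonneg (τ ^ 2), sq_nonneg (τ ^ 3)]
  have hτ8nn : (0:ℝ) ≤ τ ^ 8 := by positivity
  have hτ8le : τ ^ 8 ≤ 1 := by nlinarith only [hτ4, sq_nonneg (τ ^ 2), sq_nonneg (τ ^ 4)]
  have hτ82 : τ ^ 8 ≤ τ ^ 2 := by
    linarith only [mul_le_mul_of_nonneg_left hτ6 (sq_nonneg τ)]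
  obtain ⟨C, hCdef⟩ : ∃ C : ℝ, C = Real.cos τ := ⟨_, rfl⟩
  obtain ⟨E, hEdef⟩ : ∃ E : ℝ, E = C - (1 - τ ^ 2 / 2 + τ ^ 4 / 24 - τ ^ 6 / 720) := ⟨_, rfl⟩
  have hE : |E| ≤ τ ^ 8 / 10000 := by
    have hτ1 : |τ| ≤ 1 := le_trans hτabs (by norm_num)
    have h := cos_bound8 hτ1
    rw [← hCdef] at h
    rw [← hEdef] at h
    have h8 : |τ| ^ 8 = τ ^ 8 := by rw [← abs_pow]; exact abs_of_nonneg hτ8nn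
    rw [h8] at h
    linarith only [h, hτ8nn]
  have hEpair := abs_le.mp hE
  have hE1 : |E| ≤ 1 := by
    rw [abs_le]; constructor <;> linarith only [hEpair.1, hEpair.2, hτ8le, hτ8nn]
  have hE1pair := abs_le.mp hE1
  obtain ⟨W, hWdef⟩ : ∃ W : ℝ, W = τ ^ 2 / 2 - τ ^ 4 / 24 + τ ^ 6 / 720 := ⟨_, rfl⟩
  have hW0 : 0 ≤ W := by
    rw [hWdef]
    nlinarith only [hτ2, sq_nonneg τ, sq_nonneg (τ ^ 2), sq_nonneg (τ ^ 3)]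
  have hW2 : W ≤ τ ^ 2 / 2 := by
    rw [hWdef]
    nlinarith only [hτ2, sq_nonneg τ, sq_nonneg (τ ^ 2), sq_nonneg (τ ^ 3)]
  have hW1 : W ≤ 1 / 8 := by linarith only [hW2, hτ2]
  have hCW : C = 1 - W + E := by rw [hEdef, hWdef]; ring
  have hC1 : -1 ≤ C := hCdef ▸ Real.neg_one_le_cos τ
  have hC2 : C ≤ 1 := hCdef ▸ Real.cos_le_one τ
  obtain ⟨p, hpdef⟩ : ∃ p : ℝ, p = -(4 * a * ω ^ 2) + 2 * a * ω ^ 4 / 3 * u ^ 2 := ⟨_, rfl⟩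
  have hτ2u : ω ^ 2 * u ^ 2 = τ ^ 2 := by rw [hτdef]; ring
  have hp_ub : p ≤ -(23 / 6) * (a * ω ^ 2) := by
    have h1 : p = -(4 * a * ω ^ 2) + 2 * a * ω ^ 2 / 3 * (ω ^ 2 * u ^ 2) := by rw [hpdef]; ring
    rw [h1, hτ2u]
    nlinarith only [hτ2, hb]
  have hp_lb : -(4 * (a * ω ^ 2)) ≤ p := by
    rw [hpdef]
    have : (0:ℝ) ≤ 2 * a * ω ^ 4 / 3 * u ^ 2 := by positivity
    linarith only [this]
  have hp_abs : |p| ≤ 4 * (a * ω ^ 2) := abs_le.mpr ⟨hp_lb, by linarith only [hp_ub, hb]⟩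
  -- rewrite c₁, c₂ in terms of C
  have hs2 : Real.sin (ω * u / 2) ^ 2 = (1 - C) / 2 := by
    rw [Real.sin_sq_eq_half_sub, show 2 * (ω * u / 2) = ω * u by ring, hCdef, hτdef]
    ring
  have hcosC : Real.cos (ω * u) = C := by rw [hCdef, hτdef]
  have hc1u : c₁ u = a * (9 + C) * (1 - C) / u ^ 2 := by rw [hc₁, hs2, hcosC]; ring
  have hc2u : c₂ u = 16 * a ^ 2 * (1 - C) ^ 2 / u ^ 4 := by
    rw [hc₂, show Real.sin (ω * u / 2) ^ 4 = ((1 - C) / 2) ^ 2 by rw [← hs2]; ring]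
    ring
  have h1C_lb : 0 ≤ 1 - C := by linarith only [hC2]
  -- discriminant
  have hD : 0 ≤ c₁ u ^ 2 - 4 * c₂ u := by
    have hDval : c₁ u ^ 2 - 4 * c₂ u = a ^ 2 * (1 - C) ^ 2 * ((9 + C) ^ 2 - 64) / u ^ 4 := by
      rw [hc1u, hc2u]
      field_simp
      ring
    rw [hDval]
    have h9 : (0:ℝ) ≤ (9 + C) ^ 2 - 64 := by nlinarith only [hC1, hC2]
    positivity
  obtain ⟨s, hsdef⟩ : ∃ s : ℝ, s = Real.sqrt (c₁ u ^ 2 - 4 * c₂ u) := ⟨_, rfl⟩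
  have hs_nonneg : 0 ≤ s := hsdef ▸ Real.sqrt_nonneg _
  have hs_sq : s ^ 2 = c₁ u ^ 2 - 4 * c₂ u := by rw [hsdef]; exact Real.sq_sqrt hD
  -- upper bound on c₁
  have h1C_ub : 1 - C ≤ 51 / 100 * τ ^ 2 := by
    rw [hCW]
    linarith only [hW2, hEpair.1, hτ82, sq_nonneg τ]
  have hc1_ub : c₁ u ≤ 51 / 10 * (a * ω ^ 2) := by
    rw [hc1u, div_le_iff₀ (by positivity : (0:ℝ) < u ^ 2)]
    have key : a * (9 + C) * (1 - C) ≤ 10 * a * (1 - C) := by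
      linarith only [mul_nonneg (mul_nonneg ha.le h1C_lb) h1C_lb]
    calc a * (9 + C) * (1 - C) ≤ 10 * a * (1 - C) := key
      _ ≤ 10 * a * (51 / 100 * τ ^ 2) := by
          linarith only [mul_le_mul_of_nonneg_left h1C_ub (by positivity : (0:ℝ) ≤ 10 * a)]
      _ = 51 / 10 * (a * ω ^ 2) * u ^ 2 := by rw [← hτ2u]; ring
  -- pm : p minus the other root
  obtain ⟨pm, hpmdef⟩ : ∃ pm : ℝ, pm = p - (-(c₁ u) + s) / 2 := ⟨_, rfl⟩
  have hpm_ub : pm ≤ -(a * ω ^ 2) := by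
    rw [hpmdef]
    linarith only [hp_ub, hc1_ub, hs_nonneg, hb]
  have hpm_neg : pm < 0 := lt_of_le_of_lt hpm_ub (by linarith only [hb])
  have hpm_ne : pm ≠ 0 := ne_of_lt hpm_neg
  have hpm_abs : a * ω ^ 2 ≤ |pm| := by rw [abs_of_neg hpm_neg]; linarith only [hpm_ub]
  -- factorization
  obtain ⟨Q, hQdef⟩ : ∃ Q : ℝ, Q = p ^ 2 + c₁ u * p + c₂ u := ⟨_, rfl⟩
  have hfact : (lam₂ u - p) * pm = -Q := by
    rw [hlam₂, ← hsdef, hpmdef, hQdef]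
    linear_combination (1 / 4 : ℝ) * hs_sq
  -- key polynomial identity
  obtain ⟨M, hMdef⟩ : ∃ M : ℝ, M = a ^ 2 * τ ^ 8 * (-(31 / 180) + 103 / 2160 * τ ^ 2
      - 163 / 64800 * τ ^ 4 + 11 / 129600 * τ ^ 6 - 1 / 777600 * τ ^ 8) := ⟨_, rfl⟩
  obtain ⟨Err, hErrdef⟩ : ∃ Err : ℝ,
      Err = E * (a * u ^ 2 * p * (2 * W - 10 - E) + 16 * a ^ 2 * (E - 2 * W)) := ⟨_, rfl⟩
  have hQid : u ^ 4 * Q = M + Err := by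
    rw [hQdef, hc1u, hc2u, hCW, hMdef, hErrdef, hpdef, hWdef, hτdef]
    field_simp
    ring
  -- bounds
  have hτ8u : τ ^ 8 = ω ^ 8 * u ^ 8 := by rw [hτdef]; ring
  have hM_bound : |M| ≤ a ^ 2 * ω ^ 8 * u ^ 8 := by
    rw [hMdef, abs_mul, abs_of_nonneg (show (0:ℝ) ≤ a ^ 2 * τ ^ 8 by positivity)]
    have h2 : |(-(31 / 180) + 103 / 2160 * τ ^ 2 - 163 / 64800 * τ ^ 4
        + 11 / 129600 * τ ^ 6 - 1 / 777600 * τ ^ 8)| ≤ 1 := by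
      rw [abs_le]
      constructor <;>
        linarith only [hτ2, hτ4, hτ6, hτ8le, hτ8nn, sq_nonneg τ, sq_nonneg (τ ^ 2), sq_nonneg (τ ^ 3)]
    have h4 : a ^ 2 * τ ^ 8 * 1 = a ^ 2 * ω ^ 8 * u ^ 8 := by rw [hτ8u]; ring
    exact le_trans (mul_le_mul_of_nonneg_left h2 (by positivity)) (le_of_eq h4)
  have hstuff : |a * u ^ 2 * p * (2 * W - 10 - E) + 16 * a ^ 2 * (E - 2 * W)| ≤
      44 * (a ^ 2 * ω ^ 2) + 20 * a ^ 2 := by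
    have t1 : |a * u ^ 2 * p * (2 * W - 10 - E)| ≤ a * 1 * (4 * (a * ω ^ 2)) * 11 := by
      rw [abs_mul, abs_mul, abs_mul, abs_of_pos ha, abs_of_nonneg (sq_nonneg u)]
      have hW' : |2 * W - 10 - E| ≤ 11 := by
        rw [abs_le]
        constructor <;> linarith only [hW0, hW1, hE1pair.1, hE1pair.2]
      gcongr
    have t2 : |16 * a ^ 2 * (E - 2 * W)| ≤ 16 * a ^ 2 * (5 / 4) := by
      rw [abs_mul, abs_of_nonneg (show (0:ℝ) ≤ 16 * a ^ 2 by positivity)]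
      have hEW : |E - 2 * W| ≤ 5 / 4 := by
        rw [abs_le]
        constructor <;> linarith only [hW0, hW1, hE1pair.1, hE1pair.2]
      gcongr
    calc |a * u ^ 2 * p * (2 * W - 10 - E) + 16 * a ^ 2 * (E - 2 * W)|
        ≤ |a * u ^ 2 * p * (2 * W - 10 - E)| + |16 * a ^ 2 * (E - 2 * W)| := abs_add_le _ _
      _ ≤ a * 1 * (4 * (a * ω ^ 2)) * 11 + 16 * a ^ 2 * (5 / 4) := add_le_add t1 t2
      _ = 44 * (a ^ 2 * ω ^ 2) + 20 * a ^ 2 := by ring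
  have hErr_bound : |Err| ≤ ω ^ 8 * u ^ 8 / 10000 * (44 * (a ^ 2 * ω ^ 2) + 20 * a ^ 2) := by
    rw [hErrdef, abs_mul, ← hτ8u]
    exact mul_le_mul hE hstuff (abs_nonneg _) (by positivity)
  have hu4 : (0:ℝ) < u ^ 4 := by positivity
  have hQbound : |Q| ≤ (33 + 48 * ω ^ 2) * (a * ω ^ 6) * (a * ω ^ 2) * u ^ 4 := by
    have h1 : |u ^ 4 * Q| ≤ a ^ 2 * ω ^ 8 * u ^ 8
        + ω ^ 8 * u ^ 8 / 10000 * (44 * (a ^ 2 * ω ^ 2) + 20 * a ^ 2) := by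
      rw [hQid]
      exact le_trans (abs_add_le _ _) (add_le_add hM_bound hErr_bound)
    rw [abs_mul, abs_of_nonneg (le_of_lt hu4)] at h1
    have key : a ^ 2 * ω ^ 8 + ω ^ 8 / 10000 * (44 * (a ^ 2 * ω ^ 2) + 20 * a ^ 2)
        ≤ (33 + 48 * ω ^ 2) * (a * ω ^ 6) * (a * ω ^ 2) := by
      linarith only [sq_nonneg (a * ω ^ 4), sq_nonneg (a * ω ^ 5)]
    have h2 := mul_le_mul_of_nonneg_right key (show (0:ℝ) ≤ u ^ 8 by positivity)
    have h3 : u ^ 4 * |Q| ≤ u ^ 4 * ((33 + 48 * ω ^ 2) * (a * ω ^ 6) * (a * ω ^ 2) * u ^ 4) := by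
      linarith only [h1, h2]
    exact le_of_mul_le_mul_left h3 hu4
  -- conclude
  have heq : lam₂ u - p = -Q / pm := by
    rw [eq_div_iff hpm_ne]; exact hfact
  simp only [Real.norm_eq_abs]
  rw [← hpdef, heq, abs_div, abs_neg, abs_of_nonneg (le_of_lt hu4)]
  calc |Q| / |pm| ≤ |Q| / (a * ω ^ 2) := by gcongr
    _ ≤ (33 + 48 * ω ^ 2) * (a * ω ^ 6) * (a * ω ^ 2) * u ^ 4 / (a * ω ^ 2) := by gcongr
    _ = (33 + 48 * ω ^ 2) * (a * ω ^ 6) * u ^ 4 := by field_simp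
end

section
/- Fix real numbers ū^L ≥ 0 and H_L, H_R (anti-diffusive flux differences). The set S = {(θ_L, θ_R) ∈ [0,1]² : ū^L + θ_L H_L + θ_R H_R ≥ 0} is convex, contains (0,0), and contains the box [0, Λ_L] × [0, Λ_R], where Λ_I = min{1, ū^L / (ε - Σ_{J : H_J < 0} H_J)} if H_I < 0 and Λ_I = 1 otherwise, for any ε > 0 (indices I, J ∈ {L, R}). -/
lemma convex_setOf_nonneg_add_mul_add_mul (u a b : ℝ) :
    Convex ℝ {p : ℝ × ℝ | 0 ≤ u + p.1 * a + p.2 * b} := by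
  intro p hp q hq s t hs ht hst
  have hcomb : u + (s • p + t • q).1 * a + (s • p + t • q).2 * b
      = s * (u + p.1 * a + p.2 * b) + t * (u + q.1 * a + q.2 * b) := by
    simp only [Prod.fst_add, Prod.snd_add, Prod.smul_fst, Prod.smul_snd, smul_eq_mul]
    linear_combination (-u) * hst
  rw [Set.mem_ofPred_eq, hcomb]
  exact add_nonneg (mul_nonneg hs hp) (mul_nonneg ht hq)

lemma ite_neg_nonpos (H : ℝ) : (if H < 0 then H else 0) ≤ 0 := by
  split_ifs with h
  · exact h.le
  · exact le_rfl

lemma mul_ite_neg_le_mul {H θ c : ℝ} (hθ : 0 ≤ θ) (hθc : H < 0 → θ ≤ c) :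
    c * (if H < 0 then H else 0) ≤ θ * H := by
  split_ifs with h
  · exact mul_le_mul_of_nonpos_right (hθc h) h.le
  · rw [mul_zero]
    exact mul_nonneg hθ (not_lt.mp h)

lemma ite_neg_min_le_one (H c : ℝ) : (if H < 0 then min 1 c else 1) ≤ 1 := by
  split_ifs
  · exact min_le_left _ _
  · exact le_rfl

lemma ite_neg_min_le_of_neg {H c : ℝ} (h : H < 0) : (if H < 0 then min 1 c else 1) ≤ c := by
  rw [if_pos h]
  exact min_le_right _ _

/-- The worst case puts every negative flux difference at its full weight `c`; the margin `ε`
keeps the denominator positive and leaves the slack `c * ε ≥ 0`. -/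
lemma nonneg_add_mul_add_mul_of_le_div {u HL HR ε θL θR : ℝ} (hu : 0 ≤ u) (hε : 0 < ε)
    (hθL : 0 ≤ θL) (hθR : 0 ≤ θR)
    (hθLc : HL < 0 →
      θL ≤ u / (ε - ((if HL < 0 then HL else 0) + (if HR < 0 then HR else 0))))
    (hθRc : HR < 0 →
      θR ≤ u / (ε - ((if HL < 0 then HL else 0) + (if HR < 0 then HR else 0)))) :
    0 ≤ u + θL * HL + θR * HR := by
  set nL := if HL < 0 then HL else 0
  set nR := if HR < 0 then HR else 0
  set c := u / (ε - (nL + nR))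
  have hD : 0 < ε - (nL + nR) := by linarith [ite_neg_nonpos HL, ite_neg_nonpos HR]
  have hcD : c * (ε - (nL + nR)) = u := div_mul_cancel₀ u hD.ne'
  calc 0 ≤ c * ε := mul_nonneg (div_nonneg hu hD.le) hε.le
    _ = u + c * nL + c * nR := by linear_combination hcD
    _ ≤ u + θL * HL + θR * HR := by
      linarith [mul_ite_neg_le_mul hθL hθLc, mul_ite_neg_le_mul hθR hθRc]

theorem stmt_14 (ubarL HL HR ε : ℝ) (hubar : 0 ≤ ubarL) (hε : 0 < ε)
    (ΛL ΛR : ℝ)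
    (hΛL : ΛL = if HL < 0 then
        min 1 (ubarL / (ε - ((if HL < 0 then HL else 0) + (if HR < 0 then HR else 0))))
      else 1)
    (hΛR : ΛR = if HR < 0 then
        min 1 (ubarL / (ε - ((if HL < 0 then HL else 0) + (if HR < 0 then HR else 0))))
      else 1)
    (S : Set (ℝ × ℝ))
    (hS : S = {p : ℝ × ℝ | p.1 ∈ Set.Icc (0:ℝ) 1 ∧ p.2 ∈ Set.Icc (0:ℝ) 1 ∧
        0 ≤ ubarL + p.1 * HL + p.2 * HR}) :
    Convex ℝ S ∧ (0, 0) ∈ S ∧ Set.Icc (0:ℝ) ΛL ×ˢ Set.Icc (0:ℝ) ΛR ⊆ S := by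
  subst hS hΛL hΛR
  refine ⟨?_, ?_, ?_⟩
  · have hconv := ((convex_Icc (0:ℝ) 1).prod (convex_Icc (0:ℝ) 1)).inter
      (convex_setOf_nonneg_add_mul_add_mul ubarL HL HR)
    convert hconv using 1
    ext p
    simp only [Set.mem_ofPred_eq, Set.mem_inter_iff, Set.mem_prod, and_assoc]
  · simpa using hubar
  · rintro ⟨θL, θR⟩ ⟨⟨hθL, hθLΛ⟩, ⟨hθR, hθRΛ⟩⟩
    refine ⟨⟨hθL, hθLΛ.trans (ite_neg_min_le_one _ _)⟩,
      ⟨hθR, hθRΛ.trans (ite_neg_min_le_one _ _)⟩, ?_⟩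
    exact nonneg_add_mul_add_mul_of_le_div hubar hε hθL hθR
      (fun h => hθLΛ.trans (ite_neg_min_le_of_neg h))
      (fun h => hθRΛ.trans (ite_neg_min_le_of_neg h))
end

section
/- Fix ū^L ≥ 0 and real numbers H_L, H_R, H_D, H_U. Define for I ∈ {L,R,D,U}: Λ_I = min{1, ū^L/(ε - Σ_{J : H_J < 0} H_J)} if H_I < 0, and Λ_I = 1 otherwise (ε > 0 fixed). Then for every (θ_L, θ_R, θ_D, θ_U) ∈ [0,Λ_L]×[0,Λ_R]×[0,Λ_D]×[0,Λ_U], one has ū^L + θ_L H_L + θ_R H_R + θ_D H_D + θ_U H_U ≥ 0. Moreover the set S = {θ ∈ [0,1]⁴ : ū^L + Σ_I θ_I H_I ≥ 0} is convex. -/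
/-!
Write `s ≤ 0` for the sum of the negative fluxes and `c = ū / (ε - s)`. If every limiter on a
negative flux is at most `c`, the limited fluxes sum to at least `c * s`, and
`ū + c * s = ū * ε / (ε - s) ≥ 0`; the limiters on nonnegative fluxes only add nonnegative terms.
The admissible set is the unit cube cut by a half-space, hence convex.
-/

open Finset

variable {ι : Type*} [Fintype ι]

lemma mul_sum_filter_neg_le_sum_mul (H θ : ι → ℝ) (c : ℝ) (hθ : ∀ I, 0 ≤ θ I)
    (hθc : ∀ I, H I < 0 → θ I ≤ c) :
    c * ∑ J ∈ univ.filter (fun J => H J < 0), H J ≤ ∑ I, θ I * H I := by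
  rw [mul_sum, sum_filter]
  refine sum_le_sum fun I _ => ?_
  split_ifs with hI
  · exact mul_le_mul_of_nonpos_right (hθc I hI) hI.le
  · exact mul_nonneg (hθ I) (not_lt.mp hI)

lemma nonneg_add_sum_mul_of_le_div (u ε : ℝ) (hu : 0 ≤ u) (hε : 0 < ε) (H θ : ι → ℝ)
    (hθ : ∀ I, 0 ≤ θ I)
    (hθc : ∀ I, H I < 0 → θ I ≤ u / (ε - ∑ J ∈ univ.filter (fun J => H J < 0), H J)) :
    0 ≤ u + ∑ I, θ I * H I := by
  set s := ∑ J ∈ univ.filter (fun J => H J < 0), H J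
  have hs : s ≤ 0 := sum_nonpos fun J hJ => (mem_filter.mp hJ).2.le
  have hd : 0 < ε - s := by linarith
  have hus : -u ≤ u / (ε - s) * s := by
    rw [div_mul_eq_mul_div, le_div_iff₀ hd]
    nlinarith
  linarith [mul_sum_filter_neg_le_sum_mul H θ _ hθ hθc]

lemma convex_setOf_mem_Icc_and_nonneg_add_sum_mul (u : ℝ) (H : ι → ℝ) :
    Convex ℝ {θ : ι → ℝ | (∀ I, θ I ∈ Set.Icc (0:ℝ) 1) ∧ 0 ≤ u + ∑ I, θ I * H I} := by
  have hcube : Convex ℝ {θ : ι → ℝ | ∀ I, θ I ∈ Set.Icc (0:ℝ) 1} := by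
    simpa [Set.pi] using convex_pi (s := Set.univ) fun I _ => convex_Icc (0:ℝ) 1
  have hlin : IsLinearMap ℝ fun θ : ι → ℝ => ∑ I, θ I * H I :=
    ⟨fun x y => by simp only [Pi.add_apply, add_mul, sum_add_distrib],
     fun a x => by simp only [Pi.smul_apply, smul_eq_mul, mul_sum, mul_assoc]⟩
  have hhalf : Convex ℝ {θ : ι → ℝ | 0 ≤ u + ∑ I, θ I * H I} := by
    simpa only [← neg_le_iff_add_nonneg'] using convex_halfSpace_ge hlin (-u)
  exact hcube.inter hhalf

theorem stmt_15 (ubarL ε : ℝ) (hubar : 0 ≤ ubarL) (hε : 0 < ε)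
    (H : Fin 4 → ℝ)  -- H 0 = H_L, H 1 = H_R, H 2 = H_D, H 3 = H_U
    (Λ : Fin 4 → ℝ)
    (hΛ : ∀ I, Λ I = if H I < 0 then
        min 1 (ubarL / (ε - ∑ J ∈ Finset.univ.filter (fun J => H J < 0), H J))
      else 1) :
    (∀ θ : Fin 4 → ℝ, (∀ I, θ I ∈ Set.Icc (0:ℝ) (Λ I)) →
        0 ≤ ubarL + ∑ I, θ I * H I) ∧
    Convex ℝ {θ : Fin 4 → ℝ | (∀ I, θ I ∈ Set.Icc (0:ℝ) 1) ∧
        0 ≤ ubarL + ∑ I, θ I * H I} := by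
  refine ⟨fun θ hθ => ?_, convex_setOf_mem_Icc_and_nonneg_add_sum_mul ubarL H⟩
  refine nonneg_add_sum_mul_of_le_div ubarL ε hubar hε H θ (fun I => (hθ I).1) fun I hI => ?_
  have hθΛ := (hθ I).2
  rw [hΛ I, if_pos hI] at hθΛ
  exact hθΛ.trans (min_le_right _ _)
end
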